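/- arXiv:1209.4416 — 2 statements merged into one kernel-verified Lean document; each statement's English description precedes it below -/
import Mathlib

section
/- Let T > 0, let ξ, η : [0,T] → ℂ be continuous with ξ(t) ≠ 0 for all t ∈ [0,T], and let θ̃ : [0,T] → ℝ be continuous. Define Φ(ε) := (1/2) ∫₀ᵀ | (ξ(t) + ε η(t))/|ξ(t) + ε η(t)| − e^{i θ̃(t)} |² dt. Then Φ is differentiable at ε = 0 and Φ'(0) = ∫₀ᵀ Im( (ξ(t)/|ξ(t)|) · e^{−i θ̃(t)} ) · Im( conj(ξ(t)) · η(t) ) / |ξ(t)|² dt. -/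
/-! For `‖w‖ = 1` and `u ≠ 0` one has `‖u / ‖u‖ - w‖² = 2 - 2 Re (u w̄) / ‖u‖`, whose derivative
as `u` moves with velocity `u'` is `2 Im (u w̄) Im (ū u') / ‖u‖³`. Since `ξ` does not vanish on the
compact interval, `ξ + ε η` stays away from `0` for `|ε| ≤ δ`, so this derivative is jointly
continuous, hence bounded, on `[-δ, δ] × [0, T]`, and dominated convergence lets us differentiate
under the integral sign. -/

open intervalIntegral Complex
open scoped ComplexConjugate InnerProductSpace

theorem HasDerivAt.norm {F : Type*} [NormedAddCommGroup F] [InnerProductSpace ℝ F]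
    {f : ℝ → F} {f' : F} {x : ℝ} (hf : HasDerivAt f f' x) (h0 : f x ≠ 0) :
    HasDerivAt (‖f ·‖) (⟪f x, f'⟫_ℝ / ‖f x‖) x := by
  have := hf.norm_sq.sqrt (by positivity)
  simpa [Real.sqrt_sq (norm_nonneg _), mul_div_mul_left] using this

theorem IsCompact.exists_pos_forall_add_smul_ne_zero {X E : Type*} [TopologicalSpace X]
    [NormedAddCommGroup E] [NormedSpace ℝ E] {K : Set X} (hK : IsCompact K) {f g : X → E}
    (hf : ContinuousOn f K) (hg : ContinuousOn g K) (hf0 : ∀ t ∈ K, f t ≠ 0) :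
    ∃ δ > 0, ∀ ε ∈ Metric.closedBall (0 : ℝ) δ, ∀ t ∈ K, f t + ε • g t ≠ 0 := by
  have hcont : ContinuousOn (fun p : ℝ × X => f p.2 + p.1 • g p.2) (Set.univ ×ˢ K) :=
    (hf.comp continuousOn_snd fun _ hp => hp.2).add
      (continuousOn_fst.smul (hg.comp continuousOn_snd fun _ hp => hp.2))
  have hnear : ∀ᶠ ε in nhds (0 : ℝ), ∀ t ∈ K, f t + ε • g t ≠ 0 := by
    refine (hK.eventually_forall_of_forall_eventually
      (P := fun ε t => t ∈ K → f t + ε • g t ≠ 0) fun t ht => ?_).mono fun ε h t ht => h t ht ht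
    have := (hcont (0, t) ⟨trivial, ht⟩).tendsto.eventually_ne (by simpa using hf0 t ht)
    simpa [eventually_nhdsWithin_iff] using this
  obtain ⟨δ, hδ, hball⟩ := Metric.nhds_basis_closedBall.eventually_iff.mp hnear
  exact ⟨δ, hδ, fun ε hε => hball hε⟩

theorem intervalIntegral.hasDerivAt_integral_of_continuousOn_deriv {E : Type*}
    [NormedAddCommGroup E] [NormedSpace ℝ E] {F F' : ℝ → ℝ → E} {a b x₀ δ : ℝ} (hδ : 0 < δ)
    (hF : ∀ x ∈ Metric.ball x₀ δ, ContinuousOn (F x) (Set.uIcc a b))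
    (hF' : ContinuousOn (Function.uncurry F') (Metric.closedBall x₀ δ ×ˢ Set.uIcc a b))
    (h_diff : ∀ x ∈ Metric.ball x₀ δ, ∀ t ∈ Set.uIcc a b, HasDerivAt (F · t) (F' x t) x) :
    HasDerivAt (fun x => ∫ t in a..b, F x t) (∫ t in a..b, F' x₀ t) x₀ := by
  obtain ⟨C, hC⟩ :=
    ((isCompact_closedBall x₀ δ).prod isCompact_uIcc).exists_bound_of_continuousOn hF'
  have hF'₀ : ContinuousOn (F' x₀) (Set.uIcc a b) :=
    hF'.comp (continuousOn_const.prodMk continuousOn_id)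
      fun t ht => ⟨Metric.mem_closedBall_self hδ.le, ht⟩
  have hball := Metric.ball_mem_nhds x₀ hδ
  refine (hasDerivAt_integral_of_dominated_loc_of_deriv_le (bound := fun _ => C) hball ?_
    (hF x₀ (Metric.mem_ball_self hδ)).intervalIntegrable ?_ ?_ intervalIntegrable_const ?_).2
  · filter_upwards [hball] with x hx
    exact ((hF x hx).mono Set.uIoc_subset_uIcc).aestronglyMeasurable measurableSet_uIoc
  · exact (hF'₀.mono Set.uIoc_subset_uIcc).aestronglyMeasurable measurableSet_uIoc
  · exact MeasureTheory.ae_of_all _ fun t ht x hx =>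
      hC (x, t) ⟨Metric.ball_subset_closedBall hx, Set.uIoc_subset_uIcc ht⟩
  · exact MeasureTheory.ae_of_all _ fun t ht x hx => h_diff x hx t (Set.uIoc_subset_uIcc ht)

section

variable {X : Type*} [TopologicalSpace X] {s : Set X} {u u' w : X → ℂ}

theorem ContinuousOn.norm_div_norm_sub_sq (hu : ContinuousOn u s)
    (hw : ContinuousOn w s) (h0 : ∀ x ∈ s, u x ≠ 0) :
    ContinuousOn (fun x => ‖u x / ‖u x‖ - w x‖ ^ 2) s := by
  fun_prop (disch := simp_all)

theorem ContinuousOn.deriv_norm_div_norm_sub_sq (hu : ContinuousOn u s)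
    (hu' : ContinuousOn u' s) (hw : ContinuousOn w s) (h0 : ∀ x ∈ s, u x ≠ 0) :
    ContinuousOn
      (fun x => 2 * (u x / ‖u x‖ * conj (w x)).im * (conj (u x) * u' x).im / ‖u x‖ ^ 2) s := by
  fun_prop (disch := simp_all)

end

namespace Complex

theorem norm_div_norm_sub_sq {u w : ℂ} (hu : u ≠ 0) (hw : ‖w‖ = 1) :
    ‖u / ‖u‖ - w‖ ^ 2 = 2 - 2 * ((u * conj w).re / ‖u‖) := by
  have hu' : ‖u‖ ≠ 0 := norm_ne_zero_iff.mpr hu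
  rw [Complex.sq_norm, normSq_sub, normSq_div, normSq_ofReal, ← Complex.sq_norm,
    ← Complex.sq_norm, hw, div_mul_eq_mul_div, div_ofReal_re]
  field_simp
  ring

theorem hasDerivAt_norm_div_norm_sub_sq {u : ℝ → ℂ} {u' w : ℂ} {x : ℝ}
    (hu : HasDerivAt u u' x) (hux : u x ≠ 0) (hw : ‖w‖ = 1) :
    HasDerivAt (fun ε => ‖u ε / ‖u ε‖ - w‖ ^ 2)
      (2 * (u x / ‖u x‖ * conj w).im * (conj (u x) * u').im / ‖u x‖ ^ 2) x := by
  have hre : HasDerivAt (fun ε => (u ε * conj w).re) (u' * conj w).re x := by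
    simpa [Complex.inner] using (hasDerivAt_const x w).inner ℝ hu
  have hquot := ((hre.fun_div (hu.norm hux) (norm_ne_zero_iff.mpr hux)).const_mul 2).const_sub 2
  refine (hquot.congr_of_eventuallyEq ?_).congr_deriv ?_
  · filter_upwards [hu.continuousAt.eventually_ne hux] with ε hε using norm_div_norm_sub_sq hε hw
  · have hu' : ‖u x‖ ≠ 0 := norm_ne_zero_iff.mpr hux
    -- `Re (a * b) = Re a * Re b - Im a * Im b` for `a = u w̄`, `b = ū u'`, where `a * b = ‖u‖² u' w̄`
    have hprod : (u x * conj w * (conj (u x) * u')).re = ‖u x‖ ^ 2 * (u' * conj w).re := by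
      rw [show u x * conj w * (conj (u x) * u') = (u x * conj (u x)) * (u' * conj w) by ring,
        mul_conj, ← Complex.sq_norm, re_ofReal_mul]
    rw [mul_re] at hprod
    rw [div_mul_eq_mul_div, div_ofReal_im, Complex.inner]
    field_simp
    ring_nf at hprod ⊢
    linear_combination hprod

theorem hasDerivAt_integral_norm_div_norm_sub_sq {a b : ℝ} {ξ η w : ℝ → ℂ}
    (hξ : ContinuousOn ξ (Set.uIcc a b)) (hη : ContinuousOn η (Set.uIcc a b))
    (hw : ContinuousOn w (Set.uIcc a b)) (hξ0 : ∀ t ∈ Set.uIcc a b, ξ t ≠ 0)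
    (hw1 : ∀ t ∈ Set.uIcc a b, ‖w t‖ = 1) :
    HasDerivAt (fun ε : ℝ => ∫ t in a..b, ‖(ξ t + ε • η t) / ‖ξ t + ε • η t‖ - w t‖ ^ 2)
      (∫ t in a..b, 2 * (ξ t / ‖ξ t‖ * conj (w t)).im * (conj (ξ t) * η t).im / ‖ξ t‖ ^ 2)
      0 := by
  obtain ⟨δ, hδ, hne⟩ := isCompact_uIcc.exists_pos_forall_add_smul_ne_zero hξ hη hξ0
  have hsnd : Set.MapsTo Prod.snd (Metric.closedBall (0 : ℝ) δ ×ˢ Set.uIcc a b) (Set.uIcc a b) :=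
    fun _ hp => hp.2
  have hu : ContinuousOn (fun p : ℝ × ℝ => ξ p.2 + p.1 • η p.2)
      (Metric.closedBall 0 δ ×ˢ Set.uIcc a b) :=
    (hξ.comp continuousOn_snd hsnd).add (continuousOn_fst.smul (hη.comp continuousOn_snd hsnd))
  simpa using hasDerivAt_integral_of_continuousOn_deriv hδ (F' := fun ε t =>
      2 * ((ξ t + ε • η t) / ‖ξ t + ε • η t‖ * conj (w t)).im * (conj (ξ t + ε • η t) * η t).im
        / ‖ξ t + ε • η t‖ ^ 2)
    (fun ε hε => (hξ.add (hη.const_smul ε)).norm_div_norm_sub_sq hw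
      fun t ht => hne ε (Metric.ball_subset_closedBall hε) t ht)
    (hu.deriv_norm_div_norm_sub_sq (hη.comp continuousOn_snd hsnd) (hw.comp continuousOn_snd hsnd)
      fun p hp => hne p.1 hp.1 p.2 hp.2)
    fun ε hε t ht => hasDerivAt_norm_div_norm_sub_sq (u := fun ε => ξ t + ε • η t)
      (by simpa using ((hasDerivAt_id ε).smul_const (η t)).const_add (ξ t))
      (hne ε (Metric.ball_subset_closedBall hε) t ht) (hw1 t ht)

end Complex

theorem gateaux_differential_phase_cost (T : ℝ) (hT : 0 < T)
    (ξ η : ℝ → ℂ) (θmeas : ℝ → ℝ)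
    (hξ : ContinuousOn ξ (Set.Icc 0 T)) (hη : ContinuousOn η (Set.Icc 0 T))
    (hξ0 : ∀ t ∈ Set.Icc 0 T, ξ t ≠ 0) (hθm : ContinuousOn θmeas (Set.Icc 0 T)) :
    HasDerivAt
      (fun ε : ℝ => (1/2) * ∫ t in (0:ℝ)..T,
        (‖(ξ t + ε • η t) / ((‖ξ t + ε • η t‖ : ℝ) : ℂ)
          - Complex.exp (Complex.I * (θmeas t : ℂ))‖)^2)
      (∫ t in (0:ℝ)..T,
        ((ξ t / ((‖ξ t‖ : ℝ) : ℂ)) * Complex.exp (-Complex.I * (θmeas t : ℂ))).im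
          * ((starRingEnd ℂ) (ξ t) * η t).im / (‖ξ t‖)^2) 0 := by
  rw [← Set.uIcc_of_le hT.le] at hξ hη hξ0 hθm
  have hD := hasDerivAt_integral_norm_div_norm_sub_sq hξ hη (by fun_prop) hξ0
    fun t _ => norm_exp_I_mul_ofReal (θmeas t)
  refine (hD.const_mul (1 / 2)).congr_deriv ?_
  rw [← integral_const_mul]
  refine integral_congr fun t _ => ?_
  simp only [← exp_conj, map_mul, conj_I, conj_ofReal, neg_mul]
  ring
end

section
/- Let R > 0 and let a : [0,R] → ℝ be twice continuously differentiable with a'(0) = 0. For ℓ > 0 suppose u_ℓ : [0,R] → ℝ is twice continuously differentiable and satisfies u_ℓ(r) − ℓ² u_ℓ''(r) = a(r) for all r ∈ [0,R], with boundary conditions u_ℓ'(0) = 0 and u_ℓ(R) = a(R). Then ( ∫₀ᴿ (u_ℓ(r) − a(r))² dr )^{1/2} ≤ ℓ² ( ∫₀ᴿ a''(r)² dr )^{1/2}. In particular u_ℓ → a in L²(0,R) as ℓ → 0. -/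
/-!
The error `e = u - a` solves `e = ℓ² (e'' + a'')` with `e(R) = e'(0) = 0`. Testing this against `e`
and integrating `e e''` by parts (the boundary term vanishes, `-∫ e'²` has a sign) gives
`∫ e² ≤ ℓ² ∫ e a''`, and the pointwise bound `2 ℓ² e a'' ≤ e² + ℓ⁴ a''²` turns this into
`∫ e² ≤ ℓ⁴ ∫ a''²`.
-/

open intervalIntegral Set
open MeasureTheory (volume)

theorem integral_mul_second_deriv_le {a b : ℝ} (hab : a ≤ b) {f f' f'' : ℝ → ℝ}
    (hf : ∀ x ∈ Icc a b, HasDerivAt f (f' x) x) (hf' : ∀ x ∈ Icc a b, HasDerivAt f' (f'' x) x)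
    (hf'' : ContinuousOn f'' (Icc a b)) :
    ∫ x in a..b, f x * f'' x ≤ f b * f' b - f a * f' a := by
  rw [← uIcc_of_le hab] at hf hf' hf''
  have hf'_cont : ContinuousOn f' (uIcc a b) :=
    fun x hx ↦ (hf' x hx).continuousAt.continuousWithinAt
  rw [integral_mul_deriv_eq_deriv_mul hf hf' hf'_cont.intervalIntegrable hf''.intervalIntegrable]
  exact sub_le_self _ (integral_nonneg hab fun x _ ↦ mul_self_nonneg (f' x))

theorem integral_sq_le_mul_integral_mul_of_eq_mul_second_deriv_add {a b c : ℝ} (hab : a ≤ b)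
    (hc : 0 ≤ c) {f f' f'' g : ℝ → ℝ}
    (hf : ∀ x ∈ Icc a b, HasDerivAt f (f' x) x) (hf' : ∀ x ∈ Icc a b, HasDerivAt f' (f'' x) x)
    (hf'' : ContinuousOn f'' (Icc a b)) (hg : ContinuousOn g (Icc a b))
    (hbdry : f b * f' b ≤ f a * f' a) (hode : ∀ x ∈ Icc a b, f x = c * (f'' x + g x)) :
    ∫ x in a..b, f x ^ 2 ≤ c * ∫ x in a..b, f x * g x := by
  have hf_cont : ContinuousOn f (uIcc a b) :=
    fun x hx ↦ (hf x (uIcc_of_le hab ▸ hx)).continuousAt.continuousWithinAt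
  have hff'' : IntervalIntegrable (fun x ↦ c * (f x * f'' x)) volume a b :=
    ((hf_cont.mul (uIcc_of_le hab ▸ hf'')).intervalIntegrable).const_mul c
  have hfg : IntervalIntegrable (fun x ↦ c * (f x * g x)) volume a b :=
    ((hf_cont.mul (uIcc_of_le hab ▸ hg)).intervalIntegrable).const_mul c
  have hsplit : ∫ x in a..b, f x ^ 2
      = c * (∫ x in a..b, f x * f'' x) + c * ∫ x in a..b, f x * g x := calc
    _ = ∫ x in a..b, c * (f x * f'' x) + c * (f x * g x) := integral_congr fun x hx ↦ by
        rw [sq, ← mul_add, ← mul_add, mul_left_comm, ← hode x (uIcc_of_le hab ▸ hx)]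
    _ = _ := by rw [integral_add hff'' hfg, integral_const_mul, integral_const_mul]
  have hibp := mul_le_mul_of_nonneg_left (integral_mul_second_deriv_le hab hf hf' hf'') hc
  linarith [mul_nonpos_of_nonneg_of_nonpos hc (sub_nonpos.2 hbdry)]

theorem integral_sq_le_sq_mul_integral_sq_of_le_mul_integral_mul {a b c : ℝ} (hab : a ≤ b)
    {f g : ℝ → ℝ} (hf : ContinuousOn f (Icc a b)) (hg : ContinuousOn g (Icc a b))
    (h : ∫ x in a..b, f x ^ 2 ≤ c * ∫ x in a..b, f x * g x) :
    ∫ x in a..b, f x ^ 2 ≤ c ^ 2 * ∫ x in a..b, g x ^ 2 := by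
  rw [← uIcc_of_le hab] at hf hg
  have hf2 : IntervalIntegrable (fun x ↦ f x ^ 2) volume a b :=
    (hf.pow 2).intervalIntegrable
  have hg2 : IntervalIntegrable (fun x ↦ c ^ 2 * g x ^ 2) volume a b :=
    (hg.pow 2).intervalIntegrable.const_mul _
  have hfg : IntervalIntegrable (fun x ↦ 2 * c * (f x * g x)) volume a b :=
    (hf.mul hg).intervalIntegrable.const_mul _
  have hamgm : ∫ x in a..b, 2 * c * (f x * g x) ≤ ∫ x in a..b, f x ^ 2 + c ^ 2 * g x ^ 2 :=
    integral_mono hab hfg (hf2.add hg2) fun x ↦ by nlinarith [sq_nonneg (f x - c * g x)]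
  rw [integral_add hf2 hg2, integral_const_mul, integral_const_mul] at hamgm
  linarith

theorem elliptic_regularization_L2_error_general (R : ℝ) (hR : 0 < R)
    (a a' a'' : ℝ → ℝ)
    (ha : ∀ r ∈ Set.Icc 0 R, HasDerivAt a (a' r) r)
    (ha' : ∀ r ∈ Set.Icc 0 R, HasDerivAt a' (a'' r) r)
    (ha'' : ContinuousOn a'' (Set.Icc 0 R))
    (ha'0 : a' 0 = 0)
    (ℓ : ℝ) (u u' u'' : ℝ → ℝ)
    (hu : ∀ r ∈ Set.Icc 0 R, HasDerivAt u (u' r) r)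
    (hu' : ∀ r ∈ Set.Icc 0 R, HasDerivAt u' (u'' r) r)
    (hu'' : ContinuousOn u'' (Set.Icc 0 R))
    (heq : ∀ r ∈ Set.Icc 0 R, u r - ℓ^2 * u'' r = a r)
    (hbc0 : u' 0 = 0) (hbcR : u R = a R) :
    Real.sqrt (∫ r in (0:ℝ)..R, (u r - a r)^2)
      ≤ ℓ^2 * Real.sqrt (∫ r in (0:ℝ)..R, (a'' r)^2) := by
  have he : ∀ r ∈ Icc 0 R, HasDerivAt (fun r ↦ u r - a r) (u' r - a' r) r :=
    fun r hr ↦ (hu r hr).sub (ha r hr)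
  have he' : ∀ r ∈ Icc 0 R, HasDerivAt (fun r ↦ u' r - a' r) (u'' r - a'' r) r :=
    fun r hr ↦ (hu' r hr).sub (ha' r hr)
  have henergy := integral_sq_le_mul_integral_mul_of_eq_mul_second_deriv_add hR.le (sq_nonneg ℓ)
    he he' (hu''.sub ha'') ha'' (by simp [hbcR, hbc0, ha'0])
    fun r hr ↦ by linear_combination heq r hr
  have he_cont : ContinuousOn (fun r ↦ u r - a r) (Icc 0 R) :=
    fun r hr ↦ (he r hr).continuousAt.continuousWithinAt
  calc √(∫ r in (0:ℝ)..R, (u r - a r) ^ 2)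
      ≤ √((ℓ ^ 2) ^ 2 * ∫ r in (0:ℝ)..R, a'' r ^ 2) := Real.sqrt_le_sqrt
        (integral_sq_le_sq_mul_integral_sq_of_le_mul_integral_mul hR.le he_cont ha'' henergy)
    _ = ℓ ^ 2 * √(∫ r in (0:ℝ)..R, a'' r ^ 2) := by
        rw [Real.sqrt_mul (by positivity), Real.sqrt_sq (by positivity)]

theorem elliptic_regularization_L2_error (R : ℝ) (hR : 0 < R)
    (a a' a'' : ℝ → ℝ)
    (ha : ∀ r ∈ Set.Icc 0 R, HasDerivAt a (a' r) r)
    (ha' : ∀ r ∈ Set.Icc 0 R, HasDerivAt a' (a'' r) r)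
    (ha'' : ContinuousOn a'' (Set.Icc 0 R))
    (ha'0 : a' 0 = 0)
    (ℓ : ℝ) (hℓ : 0 < ℓ) (u u' u'' : ℝ → ℝ)
    (hu : ∀ r ∈ Set.Icc 0 R, HasDerivAt u (u' r) r)
    (hu' : ∀ r ∈ Set.Icc 0 R, HasDerivAt u' (u'' r) r)
    (hu'' : ContinuousOn u'' (Set.Icc 0 R))
    (heq : ∀ r ∈ Set.Icc 0 R, u r - ℓ^2 * u'' r = a r)
    (hbc0 : u' 0 = 0) (hbcR : u R = a R) :
    Real.sqrt (∫ r in (0:ℝ)..R, (u r - a r)^2)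
      ≤ ℓ^2 * Real.sqrt (∫ r in (0:ℝ)..R, (a'' r)^2) :=
  elliptic_regularization_L2_error_general R hR a a' a'' ha ha' ha'' ha'0 ℓ u u' u'' hu hu' hu'' heq
    hbc0 hbcR
end
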